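/- Let T be a linear, trace-preserving, positive map on M_d(ℂ), Λ the set of eigenvalues of T different from 1, and Z(T) = (id − (T − T^∞))^{-1}. Then τ(Z(T)) ≥ 1 / min_{λ∈Λ} |1 − λ|. -/

import Mathlib

open Matrix Filter
open scoped ComplexOrder

/-- Trace norm (Schatten 1-norm) of a complex matrix: `tr √(XᴴX)`. -/
noncomputable def traceNorm {d : ℕ} (X : Matrix (Fin d) (Fin d) ℂ) : ℝ :=
  let hA := Matrix.posSemidef_conjTranspose_mul_self X
  (hA.1.eigenvectorUnitary.1 * diagonal (((↑) : ℝ → ℂ) ∘ Real.sqrt ∘ hA.1.eigenvalues) *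
    (star hA.1.eigenvectorUnitary : Matrix (Fin d) (Fin d) ℂ)).trace.re

/-- Linear endomorphisms of `M_d(ℂ)` (superoperators). -/
abbrev MatEnd (d : ℕ) := Module.End ℂ (Matrix (Fin d) (Fin d) ℂ)

/-- Trace-preserving map. -/
def IsTP {d : ℕ} (T : MatEnd d) : Prop := ∀ X, (T X).trace = X.trace

/-- Positive map: maps PSD matrices to PSD matrices. -/
def IsPos {d : ℕ} (T : MatEnd d) : Prop := ∀ X, X.PosSemidef → (T X).PosSemidef

/-- Hermiticity-preserving map. -/
def IsHP {d : ℕ} (T : MatEnd d) : Prop := ∀ X, (T X)ᴴ = T Xᴴ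

/-- Induced 1→1 norm: `sup_{X ≠ 0} ‖T X‖₁ / ‖X‖₁`. -/
noncomputable def norm1to1 {d : ℕ} (T : MatEnd d) : ℝ :=
  sSup {r | ∃ X, X ≠ 0 ∧ r = traceNorm (T X) / traceNorm X}

/-- Trace-norm contraction coefficient: sup over nonzero Hermitian traceless `σ`. -/
noncomputable def tau {d : ℕ} (T : MatEnd d) : ℝ :=
  sSup {r | ∃ σ : Matrix (Fin d) (Fin d) ℂ,
    σ.IsHermitian ∧ σ.trace = 0 ∧ σ ≠ 0 ∧ r = traceNorm (T σ) / traceNorm σ}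

/-- Density matrix: positive semidefinite with unit trace. -/
def IsDensity {d : ℕ} (ρ : Matrix (Fin d) (Fin d) ℂ) : Prop := ρ.PosSemidef ∧ ρ.trace = 1

/-- `Tinf` is the Cesàro-mean fixed point projection of `T`. -/
def IsCesaroProj {d : ℕ} (T Tinf : MatEnd d) : Prop :=
  ∀ X, Tendsto (fun n : ℕ => (n : ℂ)⁻¹ • ∑ k ∈ Finset.range n, (T ^ (k + 1)) X)
    atTop (nhds (Tinf X))

/-!
Let `T X = λ X` with `λ ≠ 1`. Trace preservation forces `tr X = 0`, and the Cesàro means of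
`λᵏ` tend to `0`, so `T^∞ X = 0` and `Z X = μ X` with `μ = (1 - λ)⁻¹`. A positive map preserves
Hermiticity, so likewise `Z Xᴴ = μ̄ Xᴴ`. Then the real parts `ℜ(μⁿ X)` are Hermitian and traceless
and `Z` maps each to the next, so `‖ℜ(μⁿ X)‖₁ ≤ τ(Z)ⁿ ‖ℜ X‖₁`, and the same holds for `i X`.
As `μⁿ X` is recovered from the real parts of `μⁿ X` and `i μⁿ X`, we get `|μ|ⁿ ‖X‖ = O(τ(Z)ⁿ)`,
hence `|μ| ≤ τ(Z)`.
-/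

open ComplexStarModule Complex

lemma realPart_map_of_map_star {A B : Type*} [AddCommGroup A] [Module ℂ A] [StarAddMonoid A]
    [StarModule ℂ A] [AddCommGroup B] [Module ℂ B] [StarAddMonoid B] [StarModule ℂ B]
    (f : A →ₗ[ℂ] B) {a : A} (h : f (star a) = star (f a)) : (ℜ (f a) : B) = f (ℜ a) := by
  rw [realPart_apply_coe, realPart_apply_coe, LinearMap.map_smul_of_tower, map_add, h]

lemma norm_le_norm_realPart_add_norm_realPart_I_smul {A : Type*} [NormedAddCommGroup A]
    [NormedSpace ℂ A] [StarAddMonoid A] [StarModule ℂ A] (a : A) :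
    ‖a‖ ≤ ‖(ℜ a : A)‖ + ‖(ℜ (I • a) : A)‖ := by
  calc ‖a‖ = ‖(ℜ a : A) + I • (ℑ a : A)‖ := by rw [realPart_add_I_smul_imaginaryPart]
    _ ≤ ‖(ℜ a : A)‖ + ‖I • (ℑ a : A)‖ := norm_add_le _ _
    _ = ‖(ℜ a : A)‖ + ‖(ℜ (I • a) : A)‖ := by
      rw [norm_smul, norm_I, one_mul, realPart_I_smul, NegMemClass.coe_neg, norm_neg]

lemma trace_realPart {n : Type*} [Fintype n] (N : Matrix n n ℂ) :
    (ℜ N : Matrix n n ℂ).trace = N.trace.re := by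
  rw [realPart_apply_coe, trace_smul, trace_add, star_eq_conjTranspose, trace_conjTranspose,
    star_def, add_conj, real_smul]
  push_cast
  ring

lemma conjTranspose_add_I_smul_of_isHermitian {n : Type*} {H K : Matrix n n ℂ}
    (hH : H.IsHermitian) (hK : K.IsHermitian) : (H + I • K)ᴴ = H - I • K := by
  rw [conjTranspose_add, conjTranspose_smul, hH.eq, hK.eq, star_def, conj_I, neg_smul,
    sub_eq_add_neg]

lemma re_trace_conjTranspose_mul_self {n : Type*} [Fintype n] (X : Matrix n n ℂ) :
    (Xᴴ * X).trace.re = ∑ i, ∑ j, ‖X i j‖ ^ 2 := by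
  rw [Finset.sum_comm]
  simp only [trace, diag_apply, mul_apply, conjTranspose_apply, re_sum, star_def, conj_mul']
  norm_cast

lemma le_of_forall_pow_mul_le {a b c C : ℝ} (hb : 0 ≤ b) (hc : 0 < c)
    (h : ∀ n : ℕ, a ^ n * c ≤ b ^ n * C) : a ≤ b := by
  by_contra! hab
  have ha : 0 < a := hb.trans_lt hab
  have hlim : Tendsto (fun n : ℕ => (b / a) ^ n * C) atTop (nhds 0) := by
    simpa using (tendsto_pow_atTop_nhds_zero_of_lt_one (div_nonneg hb ha.le)
      ((div_lt_one ha).2 hab)).mul_const C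
  refine hc.not_ge (ge_of_tendsto hlim (Eventually.of_forall fun n => ?_))
  rw [div_pow, div_mul_eq_mul_div, le_div_iff₀ (pow_pos ha n), mul_comm]
  exact h n

lemma eq_zero_of_tendsto_cesaro_pow_smul {E : Type*} [AddCommGroup E] [Module ℂ E]
    [TopologicalSpace E] [IsTopologicalAddGroup E] [ContinuousSMul ℂ E] [T2Space E] {ν : ℂ}
    (hν : ν ≠ 1) {Y L : E}
    (h : Tendsto (fun n : ℕ => (n : ℂ)⁻¹ • ∑ k ∈ Finset.range n, ν ^ (k + 1) • Y) atTop (nhds L)) :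
    L = 0 := by
  set A := fun n : ℕ => (n : ℂ)⁻¹ • ∑ k ∈ Finset.range n, ν ^ (k + 1) • Y
  -- both sides equal `n⁻¹ (ν ^ (n + 1) - ν) • Y`
  have hrec : ∀ n : ℕ, 1 ≤ n →
      (1 + (n : ℂ)⁻¹) • A (n + 1) - A n - ((n : ℂ)⁻¹ * ν) • Y = (ν - 1) • A n := by
    intro n hn
    have hn₀ : (n : ℂ) ≠ 0 := Nat.cast_ne_zero.2 (by omega)
    have hgeom : (ν - 1) * ∑ k ∈ Finset.range n, ν ^ (k + 1) = ν ^ (n + 1) - ν := by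
      simp_rw [pow_succ, ← Finset.sum_mul]
      linear_combination ν * geom_sum_mul ν n
    simp only [A, ← Finset.sum_smul, smul_smul, ← sub_smul, Finset.sum_range_succ]
    congr 1
    push_cast
    field_simp
    linear_combination -hgeom
  have hlim : Tendsto (fun n : ℕ => (1 + (n : ℂ)⁻¹) • A (n + 1) - A n - ((n : ℂ)⁻¹ * ν) • Y)
      atTop (nhds (((1 : ℂ) + 0) • L - L - ((0 : ℂ) * ν) • Y)) :=
    ((((tendsto_const_nhds (x := (1 : ℂ))).add tendsto_inv_atTop_nhds_zero_nat).smul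
      (h.comp (tendsto_add_atTop_nat 1))).sub h).sub
      ((tendsto_inv_atTop_nhds_zero_nat.mul_const ν).smul_const Y)
  have hL : (ν - 1) • L = 0 := by
    refine tendsto_nhds_unique (h.const_smul (ν - 1)) ?_
    simpa using hlim.congr' ((eventually_ge_atTop 1).mono hrec)
  exact (smul_eq_zero.1 hL).resolve_left (sub_ne_zero.2 hν)

section Superoperators

attribute [local instance] Matrix.frobeniusNormedAddCommGroup Matrix.frobeniusNormedSpace

variable {d : ℕ}

local notation "𝕄" => Matrix (Fin d) (Fin d) ℂ

noncomputable def singularValues (X : 𝕄) (i : Fin d) : ℝ :=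
  √((isHermitian_conjTranspose_mul_self X).eigenvalues i)

lemma traceNorm_eq_sum_singularValues (X : 𝕄) : traceNorm X = ∑ i, singularValues X i := by
  rw [traceNorm, trace_mul_cycle, Unitary.coe_star_mul_self, one_mul, trace_diagonal, re_sum]
  rfl

lemma frobenius_norm_sq_eq_sum_sq_singularValues (X : 𝕄) :
    ‖X‖ ^ 2 = ∑ i, singularValues X i ^ 2 := by
  have h : ‖X‖ ^ 2 = (Xᴴ * X).trace.re := by
    rw [re_trace_conjTranspose_mul_self, frobenius_norm_def, ← Real.sqrt_eq_rpow,
      Real.sq_sqrt (by positivity)]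
    simp only [Real.rpow_two]
  rw [h, (isHermitian_conjTranspose_mul_self X).trace_eq_sum_eigenvalues, re_sum]
  simp [singularValues, Real.sq_sqrt (eigenvalues_conjTranspose_mul_self_nonneg X _)]

lemma frobenius_norm_le_traceNorm (X : 𝕄) : ‖X‖ ≤ traceNorm X := by
  have hs : ∀ i ∈ Finset.univ, 0 ≤ singularValues X i := fun _ _ => Real.sqrt_nonneg _
  rw [traceNorm_eq_sum_singularValues]
  refine (pow_le_pow_iff_left₀ (norm_nonneg X) (Finset.sum_nonneg hs) two_ne_zero).1 ?_
  rw [frobenius_norm_sq_eq_sum_sq_singularValues]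
  exact Finset.sum_sq_le_sq_sum_of_nonneg hs

lemma traceNorm_le_sqrt_mul_frobenius_norm (X : 𝕄) : traceNorm X ≤ √d * ‖X‖ := by
  rw [traceNorm_eq_sum_singularValues, ← Real.sqrt_sq (norm_nonneg X),
    ← Real.sqrt_mul d.cast_nonneg, frobenius_norm_sq_eq_sum_sq_singularValues]
  refine Real.le_sqrt_of_sq_le ?_
  simpa using sq_sum_le_card_mul_sum_sq (s := Finset.univ) (f := singularValues X)

lemma traceNorm_nonneg (X : 𝕄) : 0 ≤ traceNorm X :=
  (norm_nonneg X).trans (frobenius_norm_le_traceNorm X)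

lemma traceNorm_pos {X : 𝕄} (hX : X ≠ 0) : 0 < traceNorm X :=
  (norm_pos_iff.2 hX).trans_le (frobenius_norm_le_traceNorm X)

lemma traceNorm_zero : traceNorm (0 : 𝕄) = 0 :=
  le_antisymm (by simpa using traceNorm_le_sqrt_mul_frobenius_norm (d := d) 0) (traceNorm_nonneg 0)

lemma exists_traceNorm_apply_le (Z : MatEnd d) : ∃ C, ∀ X, traceNorm (Z X) ≤ C * traceNorm X := by
  obtain ⟨C, hC₀, hC⟩ := (LinearMap.toContinuousLinearMap Z).bound
  refine ⟨√d * C, fun X => ?_⟩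
  calc traceNorm (Z X) ≤ √d * ‖Z X‖ := traceNorm_le_sqrt_mul_frobenius_norm _
    _ ≤ √d * (C * traceNorm X) := by
      gcongr
      exact (hC X).trans (by gcongr; exact frobenius_norm_le_traceNorm X)
    _ = √d * C * traceNorm X := (mul_assoc _ _ _).symm

lemma div_le_tau (Z : MatEnd d) {σ : 𝕄} (hσ : σ.IsHermitian) (htr : σ.trace = 0) (hσ₀ : σ ≠ 0) :
    traceNorm (Z σ) / traceNorm σ ≤ tau Z := by
  obtain ⟨C, hC⟩ := exists_traceNorm_apply_le Z
  refine le_csSup ⟨C, ?_⟩ ⟨σ, hσ, htr, hσ₀, rfl⟩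
  rintro r ⟨σ', -, -, hσ', rfl⟩
  exact (div_le_iff₀ (traceNorm_pos hσ')).2 (hC σ')

lemma traceNorm_apply_le_tau_mul (Z : MatEnd d) {σ : 𝕄} (hσ : σ.IsHermitian) (htr : σ.trace = 0) :
    traceNorm (Z σ) ≤ tau Z * traceNorm σ := by
  rcases eq_or_ne σ 0 with rfl | hσ₀
  · simp [traceNorm_zero]
  · exact (div_le_iff₀ (traceNorm_pos hσ₀)).1 (div_le_tau Z hσ htr hσ₀)

lemma tau_nonneg (Z : MatEnd d) : 0 ≤ tau Z := by
  refine Real.sSup_nonneg ?_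
  rintro r ⟨σ, -, -, -, rfl⟩
  exact div_nonneg (traceNorm_nonneg _) (traceNorm_nonneg _)

lemma traceNorm_le_tau_pow_mul (Z : MatEnd d) {σ : ℕ → 𝕄}
    (hσ : ∀ n, (σ n).IsHermitian) (htr : ∀ n, (σ n).trace = 0) (hZ : ∀ n, Z (σ n) = σ (n + 1))
    (n : ℕ) : traceNorm (σ n) ≤ tau Z ^ n * traceNorm (σ 0) := by
  induction n with
  | zero => simp
  | succ n ih =>
    calc traceNorm (σ (n + 1)) = traceNorm (Z (σ n)) := by rw [hZ]
      _ ≤ tau Z * traceNorm (σ n) := traceNorm_apply_le_tau_mul Z (hσ n) (htr n)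
      _ ≤ tau Z * (tau Z ^ n * traceNorm (σ 0)) := by gcongr; exact tau_nonneg Z
      _ = tau Z ^ (n + 1) * traceNorm (σ 0) := by ring

lemma traceNorm_realPart_pow_smul_le (Z : MatEnd d) {M : 𝕄} {μ : ℂ}
    (hZM : Z M = μ • M) (hZM' : Z (star M) = star μ • star M) (htr : M.trace = 0) (n : ℕ) :
    traceNorm (ℜ (μ ^ n • M) : 𝕄) ≤ tau Z ^ n * traceNorm (ℜ M : 𝕄) := by
  have hZ : ∀ n, Z (μ ^ n • M) = μ ^ (n + 1) • M := fun n => by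
    rw [map_smul, hZM, smul_smul, pow_succ]
  have hZ' : ∀ n, Z (star (μ ^ n • M)) = star (Z (μ ^ n • M)) := fun n => by
    rw [star_smul, map_smul, hZM', hZ, star_smul, smul_smul, star_pow, star_pow, pow_succ]
  simpa only [pow_zero, one_smul] using
    traceNorm_le_tau_pow_mul Z (σ := fun n => (ℜ (μ ^ n • M) : 𝕄))
    (fun n => (ℜ (μ ^ n • M)).2.isHermitian)
    (fun n => by rw [trace_realPart, trace_smul, htr, smul_zero, zero_re, ofReal_zero])
    (fun n => by rw [← realPart_map_of_map_star Z (hZ' n), hZ]) n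

lemma norm_le_tau_of_apply_eq_smul (Z : MatEnd d) {X : 𝕄} {μ : ℂ}
    (hZX : Z X = μ • X) (hZX' : Z Xᴴ = star μ • Xᴴ) (htr : X.trace = 0) (hX : X ≠ 0) :
    ‖μ‖ ≤ tau Z := by
  have hZIX : Z (I • X) = μ • I • X := by rw [map_smul, hZX, smul_comm]
  have hZIX' : Z (star (I • X)) = star μ • star (I • X) := by
    rw [star_smul, map_smul, star_eq_conjTranspose, hZX', smul_comm]
  have htrI : (I • X).trace = 0 := by rw [trace_smul, htr, smul_zero]
  refine le_of_forall_pow_mul_le (tau_nonneg Z) (norm_pos_iff.2 hX)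
    (C := traceNorm (ℜ X : 𝕄) + traceNorm (ℜ (I • X) : 𝕄)) fun n => ?_
  calc ‖μ‖ ^ n * ‖X‖ = ‖μ ^ n • X‖ := by rw [norm_smul, norm_pow]
    _ ≤ ‖(ℜ (μ ^ n • X) : 𝕄)‖ + ‖(ℜ (I • μ ^ n • X) : 𝕄)‖ :=
      norm_le_norm_realPart_add_norm_realPart_I_smul _
    _ ≤ traceNorm (ℜ (μ ^ n • X) : 𝕄) + traceNorm (ℜ (μ ^ n • I • X) : 𝕄) := by
      rw [smul_comm I]
      exact add_le_add (frobenius_norm_le_traceNorm _) (frobenius_norm_le_traceNorm _)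
    _ ≤ tau Z ^ n * traceNorm (ℜ X : 𝕄) + tau Z ^ n * traceNorm (ℜ (I • X) : 𝕄) :=
      add_le_add (traceNorm_realPart_pow_smul_le Z hZX hZX' htr n)
        (traceNorm_realPart_pow_smul_le Z hZIX hZIX' htrI n)
    _ = tau Z ^ n * (traceNorm (ℜ X : 𝕄) + traceNorm (ℜ (I • X) : 𝕄)) := (mul_add _ _ _).symm

lemma IsCesaroProj.apply_eq_zero {T Tinf : MatEnd d} (hinf : IsCesaroProj T Tinf) {ν : ℂ}
    (hν : ν ≠ 1) {Y : 𝕄} (hY : T Y = ν • Y) : Tinf Y = 0 := by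
  have hpow : ∀ k : ℕ, (T ^ k) Y = ν ^ k • Y := fun k => by
    induction k with
    | zero => simp
    | succ k ih => rw [pow_succ', Module.End.mul_apply, ih, map_smul, hY, smul_smul, pow_succ]
  refine eq_zero_of_tendsto_cesaro_pow_smul hν (Y := Y) ?_
  simpa only [hpow] using hinf Y

lemma apply_eq_inv_one_sub_smul {T Tinf Z : MatEnd d} (hinf : IsCesaroProj T Tinf)
    (hZ : Z * (1 - (T - Tinf)) = 1) {a : ℂ} (ha : a ≠ 1) {Y : 𝕄}
    (hY : T Y = a • Y) : Z Y = (1 - a)⁻¹ • Y := by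
  have h : (1 - (T - Tinf)) Y = (1 - a) • Y := by
    simp [hY, hinf.apply_eq_zero ha hY, sub_smul]
  rw [eq_inv_smul_iff₀ (sub_ne_zero.2 ha.symm), ← map_smul, ← h, ← Module.End.mul_apply, hZ,
    Module.End.one_apply]

lemma IsTP.trace_eq_zero {T : MatEnd d} (hT : IsTP T) {ν : ℂ} (hν : ν ≠ 1)
    {Y : 𝕄} (hY : T Y = ν • Y) : Y.trace = 0 := by
  have h := hT Y
  rw [hY, trace_smul, smul_eq_mul] at h
  exact (mul_eq_zero.1 (by linear_combination h : (ν - 1) * Y.trace = 0)).resolve_left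
    (sub_ne_zero.2 hν)

open scoped MatrixOrder in
lemma IsPos.isHermitian_apply {T : MatEnd d} (hT : IsPos T) {H : 𝕄} (hH : H.IsHermitian) :
    (T H).IsHermitian := by
  rw [← CFC.posPart_sub_negPart H hH.isSelfAdjoint, map_sub]
  exact (hT _ (CFC.posPart_nonneg H).posSemidef).isHermitian.sub
    (hT _ (CFC.negPart_nonneg H).posSemidef).isHermitian

lemma IsPos.isHP {T : MatEnd d} (hT : IsPos T) : IsHP T := by
  intro X
  have hre := (ℜ X).2.isHermitian
  have him := (ℑ X).2.isHermitian
  calc (T X)ᴴ = (T (ℜ X) + I • T (ℑ X))ᴴ := by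
        rw [← map_smul, ← map_add, realPart_add_I_smul_imaginaryPart]
    _ = T (ℜ X) - I • T (ℑ X) := conjTranspose_add_I_smul_of_isHermitian
        (hT.isHermitian_apply hre) (hT.isHermitian_apply him)
    _ = T Xᴴ := by
        rw [← map_smul, ← map_sub, ← conjTranspose_add_I_smul_of_isHermitian hre him,
          realPart_add_I_smul_imaginaryPart]

end Superoperators

theorem tau_Z_lower_spectral_bound_general {d : ℕ} (T Tinf Z : MatEnd d)
    (hTP : IsTP T) (hPos : IsPos T) (hinf : IsCesaroProj T Tinf)
    (hZ₁ : Z * (1 - (T - Tinf)) = 1) :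
    ∀ lam : ℂ, lam ≠ 1 → Module.End.HasEigenvalue T lam →
      1 / ‖(1 : ℂ) - lam‖ ≤ tau Z := by
  intro lam hlam heig
  obtain ⟨X, hX⟩ := heig.exists_hasEigenvector
  have hTX : T X = lam • X := hX.apply_eq_smul
  have hTX' : T Xᴴ = star lam • Xᴴ := by rw [← hPos.isHP X, hTX, conjTranspose_smul]
  have hlam' : star lam ≠ 1 := fun h => hlam (by simpa using congrArg star h)
  have hZX := apply_eq_inv_one_sub_smul hinf hZ₁ hlam hTX
  have hZX' : Z Xᴴ = star (1 - lam)⁻¹ • Xᴴ := by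
    rw [star_inv₀, star_sub, star_one]
    exact apply_eq_inv_one_sub_smul hinf hZ₁ hlam' hTX'
  rw [one_div, ← norm_inv]
  exact norm_le_tau_of_apply_eq_smul Z hZX hZX' (hTP.trace_eq_zero hlam hTX) hX.2

/-- lower spectral bound `τ(Z(T)) ≥ 1/min_{λ∈Λ}|1−λ|`, expressed as:
for every non-unit eigenvalue `λ` of `T`, `1/|1−λ| ≤ τ(Z(T))`. -/
theorem tau_Z_lower_spectral_bound {d : ℕ} (T Tinf Z : MatEnd d)
    (hTP : IsTP T) (hPos : IsPos T) (hinf : IsCesaroProj T Tinf)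
    (hZ₁ : Z * (1 - (T - Tinf)) = 1) (hZ₂ : (1 - (T - Tinf)) * Z = 1) :
    ∀ lam : ℂ, lam ≠ 1 → Module.End.HasEigenvalue T lam →
      1 / ‖(1 : ℂ) - lam‖ ≤ tau Z :=
  tau_Z_lower_spectral_bound_general T Tinf Z hTP hPos hinf hZ₁
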